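/- arXiv:1304.4397 — 3 statements merged into one kernel-verified Lean document; each statement's English description precedes it below -/
import Mathlib

section
/- For each α ∈ ℕ^{<ω}, the sequence (x_{(α,j)})_{j∈ℕ} converges weakly in c to x_α. -/
open Filter Topology

noncomputable section

/-- The ambient space: bounded real sequences indexed by the positive integers,
with the sup norm.  The space `c` of convergent sequences sits inside it. -/
abbrev cSp : Type := lp (fun _ : ℕ+ => ℝ) ⊤

/-- A "good encoding" `φ : ℕ^{<ω} → ℕ` : a bijection from finite sequences of positive
integers to positive integers sending the empty sequence to `1`, monotone for the prefix
order, and strictly increasing in the last coordinate. -/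
def GoodEnc (e : List ℕ+ ≃ ℕ+) : Prop :=
  e [] = 1 ∧ (∀ α β : List ℕ+, α <+: β → e α ≤ e β) ∧
    ∀ α : List ℕ+, StrictMono fun j : ℕ+ => e (α ++ [j])

/-- The element `x_α ∈ c`: coordinate `i` equals `1` if `φ⁻¹(i)` is a prefix of `α`
and `-1` otherwise. -/
def xel (e : List ℕ+ ≃ ℕ+) (α : List ℕ+) : cSp :=
  ⟨fun i => if e.symm i <+: α then (1 : ℝ) else -1, by
    apply memℓp_infty
    refine ⟨1, ?_⟩
    rintro r ⟨i, rfl⟩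
    by_cases h : e.symm i <+: α <;> simp [h]⟩

/-- `A = {x_α : α ∈ ℕ^{<ω}}`. -/
def Aset (e : List ℕ+ ≃ ℕ+) : Set cSp := Set.range (xel e)

/-- `K` = closed convex hull of `A ∪ (−A)`. -/
def Kset (e : List ℕ+ ≃ ℕ+) : Set cSp := closure (convexHull ℝ (Aset e ∪ -Aset e))

/-- `U` is open for the weak topology of `X`. -/
def WOpen {X : Type*} [NormedAddCommGroup X] [NormedSpace ℝ X] (U : Set X) : Prop :=
  IsOpen (X := WeakSpace ℝ X) U

/-!
Appending `j` to `α` changes `x_α` only at the coordinate `φ(α, j)`, from `-1` to `1`, so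
`x_{(α,j)} = x_α + 2 e_{φ(α,j)}`. A functional on `ℓ∞` restricted to the unit vectors is
absolutely summable (test it against finite sign vectors of norm one), hence tends to zero
along the pairwise distinct coordinates `φ(α, j)`.
-/

namespace lp

variable {ι : Type*} [DecidableEq ι]

theorem dual_apply_single {p : ENNReal} [Fact (1 ≤ p)]
    (f : StrongDual ℝ (lp (fun _ : ι => ℝ) p)) (i : ι) (c : ℝ) :
    f (lp.single p i c) = c * f (lp.single p i 1) := by
  rw [← smul_eq_mul, ← map_smul, ← lp.single_smul, smul_eq_mul, mul_one]

theorem summable_abs_dual_apply_single (f : StrongDual ℝ (lp (fun _ : ι => ℝ) ⊤)) :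
    Summable fun i => |f (lp.single ⊤ i 1)| := by
  refine summable_of_sum_le (fun _ => abs_nonneg _) (c := ‖f‖) fun s => ?_
  set x : lp (fun _ : ι => ℝ) ⊤ :=
    ∑ i ∈ s, lp.single ⊤ i (SignType.sign (f (lp.single ⊤ i 1)) : ℝ)
  have hx : ‖x‖ ≤ 1 := lp.norm_le_of_forall_le zero_le_one fun i => by
    simp only [x, lp.coeFn_sum, Finset.sum_apply, lp.coeFn_single, Finset.sum_pi_single]
    split_ifs
    · cases SignType.sign (f (lp.single ⊤ i 1)) <;> simp
    · simp
  have hfx : f x = ∑ i ∈ s, |f (lp.single ⊤ i 1)| := by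
    simp only [x, map_sum, dual_apply_single f _ (SignType.sign _ : ℝ), sign_mul_self]
  calc ∑ i ∈ s, |f (lp.single ⊤ i 1)| = f x := hfx.symm
    _ ≤ ‖f‖ * ‖x‖ := (le_abs_self _).trans (f.le_opNorm x)
    _ ≤ ‖f‖ := mul_le_of_le_one_right (norm_nonneg _) hx

theorem tendsto_dual_apply_single_cofinite (f : StrongDual ℝ (lp (fun _ : ι => ℝ) ⊤))
    (c : ℝ) :
    Tendsto (fun i => f (lp.single ⊤ i c)) cofinite (𝓝 0) := by
  simpa only [dual_apply_single f _ c, mul_zero] using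
    (summable_abs_dual_apply_single f).of_abs.tendsto_cofinite_zero.const_mul c

end lp

theorem xel_append_singleton (e : List ℕ+ ≃ ℕ+) (α : List ℕ+) (j : ℕ+) :
    xel e (α ++ [j]) = xel e α + lp.single ⊤ (e (α ++ [j])) 2 := by
  ext i
  simp only [xel, lp.coeFn_add, Pi.add_apply, lp.single_apply, Pi.single_apply,
    List.prefix_concat_iff, Equiv.symm_apply_eq]
  by_cases hi : i = e (α ++ [j])
  · have : ¬ α ++ [j] <+: α := fun h => by simpa using h.length_le
    norm_num [hi, this]
  · simp [hi]

theorem xel_extend_tendsto_weakly_general (e : List ℕ+ ≃ ℕ+) (α : List ℕ+) :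
    ∀ f : StrongDual ℝ cSp,
      Tendsto (fun j : ℕ+ => f (xel e (α ++ [j]))) atTop (𝓝 (f (xel e α))) := by
  intro f
  have hinj : Function.Injective fun j : ℕ+ => e (α ++ [j]) :=
    e.injective.comp ((List.append_right_injective α).comp List.singleton_injective)
  have hsingle :=
    ((lp.tendsto_dual_apply_single_cofinite f 2).comp hinj.tendsto_cofinite).mono_left
      atTop_le_cofinite
  simp only [xel_append_singleton, map_add]
  simpa using tendsto_const_nhds.add hsingle

/-- for each `α ∈ ℕ^{<ω}` the sequence `(x_{(α,j)})_j` converges weakly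
to `x_α`. -/
theorem xel_extend_tendsto_weakly (e : List ℕ+ ≃ ℕ+) (he : GoodEnc e) (α : List ℕ+) :
    ∀ f : StrongDual ℝ cSp,
      Tendsto (fun j : ℕ+ => f (xel e (α ++ [j]))) atTop (𝓝 (f (xel e α))) :=
  xel_extend_tendsto_weakly_general e α
end
end

section
/- Every slice of the set K = closed convex hull of A ∪ (−A) in c has diameter 2, where A = {x_α : α ∈ ℕ^{<ω}}. -/
/-!
Extending `α` by one letter `j` changes `x_α` in a single coordinate only:
`x_{α⌢j} - x_α = 2 e_{φ(α⌢j)}`. As `j` varies these are supported on distinct coordinates,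
so all their finite sums have norm `2`, and therefore no functional is `≤ -δ` on all of
them. Hence a slice containing `x_α` also contains some `x_{α⌢j}`, which lies at
distance `2` from `x_α`. Every slice of a closed convex hull meets the generating set, so this
applies to every slice of `K`, and `K` lies in the unit ball.
-/

open Filter Topology

noncomputable section

theorem lp.norm_sum_single_top_le {α : Type*} {E : α → Type*} [∀ i, NormedAddCommGroup (E i)]
    [DecidableEq α] (s : Finset α) (f : ∀ i, E i) {C : ℝ} (hC : 0 ≤ C)
    (hf : ∀ i ∈ s, ‖f i‖ ≤ C) : ‖∑ i ∈ s, lp.single ⊤ i (f i)‖ ≤ C := by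
  refine lp.norm_le_of_forall_le hC fun i => ?_
  simp only [lp.coeFn_sum, Finset.sum_apply, lp.coeFn_single, Finset.sum_pi_single]
  split_ifs with hi
  exacts [hf i hi, by simpa using hC]

theorem exists_neg_lt_apply_of_norm_sum_le {ι E : Type*} [Infinite ι] [NormedAddCommGroup E]
    [NormedSpace ℝ E] (u : ι → E) {C : ℝ} (hu : ∀ s : Finset ι, ‖∑ j ∈ s, u j‖ ≤ C)
    (g : StrongDual ℝ E) {δ : ℝ} (hδ : 0 < δ) : ∃ j, -δ < g (u j) := by
  by_contra! hneg
  obtain ⟨N, hN⟩ := exists_nat_gt (‖g‖ * C / δ)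
  obtain ⟨s, rfl⟩ := Infinite.exists_subset_card_eq ι N
  have hupper : ‖g (∑ j ∈ s, u j)‖ ≤ ‖g‖ * C :=
    (g.le_opNorm _).trans (mul_le_mul_of_nonneg_left (hu s) (norm_nonneg g))
  have hlower : s.card * δ ≤ -g (∑ j ∈ s, u j) := by
    rw [map_sum, ← Finset.sum_neg_distrib, ← nsmul_eq_mul]
    exact Finset.card_nsmul_le_sum _ _ _ fun j _ => le_neg.mpr (hneg j)
  rw [div_lt_iff₀ hδ] at hN
  linarith [neg_le_abs (g (∑ j ∈ s, u j)), Real.norm_eq_abs (g (∑ j ∈ s, u j))]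

theorem exists_lt_apply_of_mem_closure_convexHull {E : Type*} [AddCommGroup E] [Module ℝ E]
    [TopologicalSpace E] (f : StrongDual ℝ E) {B : Set E} {x : E}
    (hx : x ∈ closure (convexHull ℝ B)) {c : ℝ} (hc : c < f x) : ∃ y ∈ B, c < f y := by
  by_contra! hB
  have hsub : closure (convexHull ℝ B) ⊆ {x | f x ≤ c} :=
    closure_minimal (convexHull_min hB (convex_halfSpace_le f.toLinearMap.isLinear c))
      (isClosed_le f.continuous continuous_const)
  exact (hsub hx).not_gt hc

section Tree

variable (e : List ℕ+ ≃ ℕ+)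

theorem xel_append_singleton_sub (α : List ℕ+) (j : ℕ+) :
    xel e (α ++ [j]) - xel e α = lp.single ⊤ (e (α ++ [j])) 2 := by
  ext i
  obtain ⟨β, rfl⟩ := e.surjective i
  simp only [lp.coeFn_sub, Pi.sub_apply, xel, lp.single_apply, Pi.single_apply,
    Equiv.symm_apply_apply, e.injective.eq_iff, List.prefix_concat_iff]
  by_cases hβ : β = α ++ [j]
  · subst hβ
    have hlong : ¬α ++ [j] <+: α := fun h => by simpa using h.length_le
    simp only [hlong]
    norm_num
  · by_cases hβα : β <+: α <;> simp [hβ, hβα]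

theorem dist_xel_append_singleton (α : List ℕ+) (j : ℕ+) :
    dist (xel e α) (xel e (α ++ [j])) = 2 := by
  rw [dist_comm, dist_eq_norm, xel_append_singleton_sub, lp.norm_single ENNReal.zero_lt_top]
  norm_num

theorem exists_lt_apply_xel_append_singleton (g : StrongDual ℝ cSp) (α : List ℕ+) {δ : ℝ}
    (hδ : 0 < δ) : ∃ j, g (xel e α) - δ < g (xel e (α ++ [j])) := by
  have hsums (s : Finset ℕ+) : ‖∑ j ∈ s, (xel e (α ++ [j]) - xel e α)‖ ≤ 2 := by
    simp only [xel_append_singleton_sub]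
    rw [← Finset.sum_image (g := fun j => e (α ++ [j])) (f := fun i => lp.single ⊤ i (2 : ℝ))
      fun a _ b _ h => by simpa using e.injective h]
    exact lp.norm_sum_single_top_le _ (fun _ => 2) zero_le_two (by simp)
  obtain ⟨j, hj⟩ := exists_neg_lt_apply_of_norm_sum_le _ hsums g hδ
  exact ⟨j, by linarith [map_sub g (xel e (α ++ [j])) (xel e α)]⟩

theorem norm_xel_le (α : List ℕ+) : ‖xel e α‖ ≤ 1 := by
  refine lp.norm_le_of_forall_le zero_le_one fun i => ?_
  by_cases h : e.symm i <+: α <;> simp [xel, h]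

theorem Kset_subset_closedBall : Kset e ⊆ Metric.closedBall 0 1 := by
  refine closure_minimal (convexHull_min ?_ (convex_closedBall 0 1)) Metric.isClosed_closedBall
  rintro x (⟨α, rfl⟩ | ⟨α, hα⟩)
  · simpa using norm_xel_le e α
  · simpa [← norm_neg x, ← hα] using norm_xel_le e α

theorem exists_mem_lt_apply_dist_eq_two {y : cSp} (hy : y ∈ Aset e ∪ -Aset e)
    (f : StrongDual ℝ cSp) {c : ℝ} (hc : c < f y) :
    ∃ z ∈ Aset e ∪ -Aset e, c < f z ∧ dist y z = 2 := by
  rcases hy with ⟨α, rfl⟩ | ⟨α, hα⟩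
  · obtain ⟨j, hj⟩ := exists_lt_apply_xel_append_singleton e f α (sub_pos.mpr hc)
    exact ⟨_, Or.inl ⟨α ++ [j], rfl⟩, by linarith, dist_xel_append_singleton e α j⟩
  · obtain rfl : y = -xel e α := neg_eq_iff_eq_neg.mp hα.symm
    obtain ⟨j, hj⟩ := exists_lt_apply_xel_append_singleton e (-f) α (sub_pos.mpr hc)
    refine ⟨-xel e (α ++ [j]), Or.inr ⟨α ++ [j], (neg_neg _).symm⟩, ?_, ?_⟩
    · simp only [neg_apply, map_neg] at hj ⊢
      linarith
    · rw [dist_neg_neg, dist_xel_append_singleton]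

end Tree

theorem slice_diam_eq_two_general (e : List ℕ+ ≃ ℕ+)
    (f : StrongDual ℝ cSp) (lam : ℝ) (hlam : 0 < lam) :
    Metric.diam {x ∈ Kset e | sSup (f '' Kset e) - lam < f x} = 2 := by
  set M := sSup (f '' Kset e)
  have hAK : Aset e ∪ -Aset e ⊆ Kset e := (subset_convexHull ℝ _).trans subset_closure
  have hK : (Kset e).Nonempty := ⟨xel e [], hAK (Or.inl ⟨[], rfl⟩)⟩
  obtain ⟨_, ⟨x, hxK, rfl⟩, hx⟩ := exists_lt_of_lt_csSup (hK.image f) (sub_lt_self M hlam)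
  obtain ⟨y, hyA, hy⟩ := exists_lt_apply_of_mem_closure_convexHull f hxK hx
  obtain ⟨z, hzA, hz, hyz⟩ := exists_mem_lt_apply_dist_eq_two e hyA f hy
  have hball : {x ∈ Kset e | M - lam < f x} ⊆ Metric.closedBall 0 1 :=
    fun x hx => Kset_subset_closedBall e hx.1
  apply le_antisymm
  · calc _ ≤ Metric.diam (Metric.closedBall (0 : cSp) 1) :=
          Metric.diam_mono hball Metric.isBounded_closedBall
      _ ≤ 2 * 1 := Metric.diam_closedBall zero_le_one
      _ = 2 := mul_one 2
  · exact hyz ▸ Metric.dist_le_diam_of_mem (Metric.isBounded_closedBall.subset hball)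
      ⟨hAK hyA, hy⟩ ⟨hAK hzA, hz⟩

/-- every slice of `K = closed convex hull of A ∪ (−A)` has diameter `2`
in the sup norm. -/
theorem slice_diam_eq_two (e : List ℕ+ ≃ ℕ+) (he : GoodEnc e)
    (f : StrongDual ℝ cSp) (lam : ℝ) (hlam : 0 < lam)
    (hlam' : lam < sSup (f '' Kset e)) :
    Metric.diam {x ∈ Kset e | sSup (f '' Kset e) - lam < f x} = 2 :=
  slice_diam_eq_two_general e f lam hlam
end
end

section
/- If each X_n has the slice diameter 2 property, then the ℓ₂-sum Z = (⊕_n X_n)_{ℓ₂} has the slice diameter 2 property. -/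
/-!
Let `f` be a norm-one functional on `ℓ²(X)` and `fᵢ` its restriction to the summand `Xᵢ`. By
Cauchy–Schwarz, `r = (∑_{i ∈ s} ‖fᵢ‖²)^{1/2}` is close to `1` for a suitable finite set `s`. In each
`Xᵢ` take two far-apart points `uᵢ, vᵢ` of a thin slice of `fᵢ / ‖fᵢ‖`; the weights `cᵢ = ‖fᵢ‖ / r`
form a unit vector of `ℓ²(s)`, so `z = ∑ cᵢ uᵢ` and `w = ∑ cᵢ vᵢ` lie in the unit ball, nearly
attain `‖f‖ = 1`, and `‖z - w‖² = ∑ cᵢ² ‖uᵢ - vᵢ‖²` is close to `4`.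
-/

open Filter Topology

noncomputable section

open Metric

section Slice

variable {E : Type*} [NormedAddCommGroup E] [NormedSpace ℝ E]

def unitBallSlice (f : StrongDual ℝ E) (α : ℝ) : Set E :=
  {x ∈ closedBall (0 : E) 1 | 1 - α < f x}

variable (E) in
def HasSliceDiameterTwo : Prop :=
  ∀ f : StrongDual ℝ E, ‖f‖ = 1 → ∀ α : ℝ, 0 < α → diam (unitBallSlice f α) = 2

lemma diam_unitBallSlice_le_two (f : StrongDual ℝ E) (α : ℝ) : diam (unitBallSlice f α) ≤ 2 :=
  calc diam (unitBallSlice f α) ≤ diam (closedBall (0 : E) 1) :=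
        diam_mono (fun _ hx => hx.1) isBounded_closedBall
    _ ≤ 2 := by simpa using diam_closedBall (x := (0 : E)) zero_le_one

lemma HasSliceDiameterTwo.of_forall_exists_le_dist
    (h : ∀ f : StrongDual ℝ E, ‖f‖ = 1 → ∀ α : ℝ, 0 < α → ∀ δ : ℝ, 0 ≤ δ → δ < 2 →
      ∃ x ∈ unitBallSlice f α, ∃ y ∈ unitBallSlice f α, δ ≤ dist x y) :
    HasSliceDiameterTwo E := by
  intro f hf α hα
  refine (diam_unitBallSlice_le_two f α).antisymm (le_of_forall_lt_imp_le_of_dense fun δ hδ => ?_)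
  rcases lt_or_ge δ 0 with hδ0 | hδ0
  · exact hδ0.le.trans diam_nonneg
  obtain ⟨x, hx, y, hy, hxy⟩ := h f hf α hα δ hδ0 hδ
  have hbdd : Bornology.IsBounded (unitBallSlice f α) :=
    isBounded_closedBall.subset fun _ hz => hz.1
  exact hxy.trans (dist_le_diam_of_mem hbdd hx hy)

lemma HasSliceDiameterTwo.exists_pair (h : HasSliceDiameterTwo E) (g : StrongDual ℝ E)
    {β : ℝ} (hβ : 0 < β) {δ : ℝ} (hδ : δ < 2) :
    ∃ u ∈ closedBall (0 : E) 1, ∃ v ∈ closedBall (0 : E) 1,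
      (1 - β) * ‖g‖ ≤ g u ∧ (1 - β) * ‖g‖ ≤ g v ∧ (g ≠ 0 → δ ≤ ‖u - v‖) := by
  rcases eq_or_ne g 0 with rfl | hg
  · exact ⟨0, by simp, 0, by simp, by simp, by simp, fun h => absurd rfl h⟩
  have hg0 : 0 < ‖g‖ := norm_pos_iff.mpr hg
  have hdiam := h (‖g‖⁻¹ • g) (by simp [norm_smul, hg0.ne']) β hβ
  obtain ⟨u, hu, v, hv, huv⟩ : ∃ u ∈ unitBallSlice (‖g‖⁻¹ • g) β,
      ∃ v ∈ unitBallSlice (‖g‖⁻¹ • g) β, max δ 0 < dist u v := by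
    by_contra! hle
    have := diam_le_of_forall_dist_le (le_max_right δ 0) hle
    linarith [max_lt hδ two_pos]
  have hslice : ∀ x ∈ unitBallSlice (‖g‖⁻¹ • g) β, (1 - β) * ‖g‖ ≤ g x := fun x hx => by
    have := hx.2
    rw [smul_apply, smul_eq_mul, lt_inv_mul_iff₀ hg0] at this
    linarith
  exact ⟨u, hu.1, v, hv.1, hslice u hu, hslice v hv,
    fun _ => (le_max_left δ 0).trans (dist_eq_norm u v ▸ huv).le⟩

end Slice

namespace lp

variable {ι : Type*} {X : ι → Type*} [∀ i, NormedAddCommGroup (X i)]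

lemma sum_norm_sq_le_norm_sq (x : lp X 2) (s : Finset ι) : ∑ i ∈ s, ‖x i‖ ^ 2 ≤ ‖x‖ ^ 2 := by
  simpa using lp.sum_rpow_le_norm_rpow (p := 2) (by norm_num) x s

lemma norm_sum_single_sq [DecidableEq ι] (y : ∀ i, X i) (s : Finset ι) :
    ‖∑ i ∈ s, lp.single 2 i (y i)‖ ^ 2 = ∑ i ∈ s, ‖y i‖ ^ 2 := by
  simpa using lp.norm_sum_single (E := X) (p := 2) (by norm_num) y s

variable [∀ i, NormedSpace ℝ (X i)]

lemma abs_sum_apply_le (g : ∀ i, StrongDual ℝ (X i)) (x : lp X 2) (s : Finset ι) :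
    |∑ i ∈ s, g i (x i)| ≤ √(∑ i ∈ s, ‖g i‖ ^ 2) * ‖x‖ :=
  calc |∑ i ∈ s, g i (x i)| ≤ ∑ i ∈ s, |g i (x i)| := Finset.abs_sum_le_sum_abs _ _
    _ ≤ ∑ i ∈ s, ‖g i‖ * ‖x i‖ := Finset.sum_le_sum fun i _ => (g i).le_opNorm (x i)
    _ ≤ √(∑ i ∈ s, ‖g i‖ ^ 2) * √(∑ i ∈ s, ‖x i‖ ^ 2) := Real.sum_mul_le_sqrt_mul_sqrt _ _ _
    _ ≤ √(∑ i ∈ s, ‖g i‖ ^ 2) * ‖x‖ := by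
      gcongr
      exact Real.sqrt_le_iff.2 ⟨norm_nonneg x, sum_norm_sq_le_norm_sq x s⟩

variable [DecidableEq ι]

def compSingle (f : StrongDual ℝ (lp X 2)) (i : ι) : StrongDual ℝ (X i) :=
  f.comp (lp.singleContinuousLinearMap ℝ X 2 i)

@[simp]
lemma compSingle_apply (f : StrongDual ℝ (lp X 2)) (i : ι) (a : X i) :
    compSingle f i a = f (lp.single 2 i a) :=
  rfl

lemma exists_lt_sqrt_sum_norm_compSingle_sq (f : StrongDual ℝ (lp X 2)) {t : ℝ} (ht : t < ‖f‖) :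
    ∃ s : Finset ι, t < √(∑ i ∈ s, ‖compSingle f i‖ ^ 2) := by
  obtain ⟨x, hx, hfx⟩ := f.exists_lt_apply_of_lt_opNorm ht
  have hsum : HasSum (fun i => compSingle f i (x i)) (f x) :=
    (lp.hasSum_single (by norm_num) x).mapL f
  obtain ⟨s, hs⟩ := (((continuous_norm.tendsto _).comp hsum).eventually (lt_mem_nhds hfx)).exists
  refine ⟨s, hs.trans_le ?_⟩
  calc ‖∑ i ∈ s, compSingle f i (x i)‖ ≤ √(∑ i ∈ s, ‖compSingle f i‖ ^ 2) * ‖x‖ :=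
        abs_sum_apply_le _ x s
    _ ≤ √(∑ i ∈ s, ‖compSingle f i‖ ^ 2) := mul_le_of_le_one_right (Real.sqrt_nonneg _) hx.le

lemma norm_sum_single_smul_le_one {c : ι → ℝ} {s : Finset ι} (hc : ∑ i ∈ s, c i ^ 2 ≤ 1)
    {y : ∀ i, X i} (hy : ∀ i, ‖y i‖ ≤ 1) : ‖∑ i ∈ s, lp.single 2 i (c i • y i)‖ ≤ 1 := by
  rw [← pow_le_one_iff_of_nonneg (norm_nonneg _) two_ne_zero, norm_sum_single_sq]
  refine le_trans (Finset.sum_le_sum fun i _ => ?_) hc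
  rw [norm_smul, mul_pow, Real.norm_eq_abs, sq_abs]
  exact mul_le_of_le_one_right (sq_nonneg _) (pow_le_one₀ (norm_nonneg _) (hy i))

lemma le_norm_sum_single_smul_sub {c : ι → ℝ} {s : Finset ι} (hc : ∑ i ∈ s, c i ^ 2 = 1)
    {y z : ∀ i, X i} {δ : ℝ} (hδ : 0 ≤ δ) (hyz : ∀ i, c i ≠ 0 → δ ≤ ‖y i - z i‖) :
    δ ≤ ‖∑ i ∈ s, lp.single 2 i (c i • y i) - ∑ i ∈ s, lp.single 2 i (c i • z i)‖ := by
  rw [← pow_le_pow_iff_left₀ hδ (norm_nonneg _) two_ne_zero, ← Finset.sum_sub_distrib]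
  simp_rw [← lp.single_sub, ← smul_sub, norm_sum_single_sq, norm_smul, mul_pow, Real.norm_eq_abs,
    sq_abs]
  calc δ ^ 2 = ∑ i ∈ s, c i ^ 2 * δ ^ 2 := by rw [← Finset.sum_mul, hc, one_mul]
    _ ≤ ∑ i ∈ s, c i ^ 2 * ‖y i - z i‖ ^ 2 := Finset.sum_le_sum fun i _ => by
      rcases eq_or_ne (c i) 0 with hci | hci
      · simp [hci]
      · gcongr
        exact hyz i hci

end lp

open lp in
theorem HasSliceDiameterTwo.lp_two {ι : Type*} {X : ι → Type*} [∀ i, NormedAddCommGroup (X i)]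
    [∀ i, NormedSpace ℝ (X i)] (h : ∀ i, HasSliceDiameterTwo (X i)) :
    HasSliceDiameterTwo (lp X 2) := by
  classical
  refine .of_forall_exists_le_dist fun f hf α hα δ hδ0 hδ2 => ?_
  obtain ⟨β, hβ, hβα, hβ1⟩ : ∃ β : ℝ, 0 < β ∧ 2 * β ≤ α ∧ β ≤ 1 / 2 :=
    ⟨min α 1 / 2, by positivity, by linarith [min_le_left α 1], by linarith [min_le_right α 1]⟩
  obtain ⟨s, hs⟩ := exists_lt_sqrt_sum_norm_compSingle_sq f (t := 1 - β) (by rw [hf]; linarith)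
  set r := √(∑ i ∈ s, ‖compSingle f i‖ ^ 2)
  have hr : 0 < r := by linarith
  have hr_sq : r ^ 2 = ∑ i ∈ s, ‖compSingle f i‖ ^ 2 := Real.sq_sqrt (by positivity)
  choose u hu v hv hfu hfv huv using fun i => (h i).exists_pair (compSingle f i) hβ hδ2
  set c : ι → ℝ := fun i => ‖compSingle f i‖ / r
  have hc : ∑ i ∈ s, c i ^ 2 = 1 := by
    simp_rw [c, div_pow, ← Finset.sum_div, ← hr_sq]
    exact div_self (by positivity)
  have hmem : ∀ y : ∀ i, X i, (∀ i, y i ∈ closedBall 0 1) →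
      (∀ i, (1 - β) * ‖compSingle f i‖ ≤ compSingle f i (y i)) →
      ∑ i ∈ s, lp.single 2 i (c i • y i) ∈ unitBallSlice f α := by
    intro y hy hfy
    refine ⟨mem_closedBall_zero_iff.2 (norm_sum_single_smul_le_one hc.le
      fun i => mem_closedBall_zero_iff.1 (hy i)), ?_⟩
    calc 1 - α < (1 - β) ^ 2 := by nlinarith
      _ ≤ (1 - β) * r := by rw [sq]; gcongr; linarith
      _ = ∑ i ∈ s, c i * ((1 - β) * ‖compSingle f i‖) := by
        simp_rw [c, mul_left_comm _ (1 - β), ← Finset.mul_sum, div_mul_eq_mul_div, ← sq,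
          ← Finset.sum_div, ← hr_sq]
        field_simp
      _ ≤ ∑ i ∈ s, c i * compSingle f i (y i) :=
        Finset.sum_le_sum fun i _ => mul_le_mul_of_nonneg_left (hfy i) (by positivity)
      _ = f (∑ i ∈ s, lp.single 2 i (c i • y i)) := by simp [map_sum]
  refine ⟨_, hmem u hu hfu, _, hmem v hv hfv, ?_⟩
  rw [dist_eq_norm]
  exact le_norm_sum_single_smul_sub hc hδ0 fun i hci => huv i fun h0 => hci (by simp [c, h0])

theorem l2_sum_SD2P_general (X : ℕ → Type*) [∀ n, NormedAddCommGroup (X n)]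
    [∀ n, NormedSpace ℝ (X n)]
    (hsd : ∀ n, ∀ f : StrongDual ℝ (X n), ‖f‖ = 1 → ∀ α : ℝ, 0 < α →
      Metric.diam {x ∈ Metric.closedBall (0 : X n) 1 | 1 - α < f x} = 2) :
    ∀ f : StrongDual ℝ (lp X 2), ‖f‖ = 1 → ∀ α : ℝ, 0 < α →
      Metric.diam {x ∈ Metric.closedBall (0 : lp X 2) 1 | 1 - α < f x} = 2 :=
  HasSliceDiameterTwo.lp_two hsd

/-- if each `X n` has the slice diameter 2 property, then so does the
`ℓ₂`-sum `(⊕_n X_n)_{ℓ₂}`. -/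
theorem l2_sum_SD2P (X : ℕ → Type*) [∀ n, NormedAddCommGroup (X n)]
    [∀ n, NormedSpace ℝ (X n)] [∀ n, CompleteSpace (X n)]
    (hsd : ∀ n, ∀ f : StrongDual ℝ (X n), ‖f‖ = 1 → ∀ α : ℝ, 0 < α →
      Metric.diam {x ∈ Metric.closedBall (0 : X n) 1 | 1 - α < f x} = 2) :
    ∀ f : StrongDual ℝ (lp X 2), ‖f‖ = 1 → ∀ α : ℝ, 0 < α →
      Metric.diam {x ∈ Metric.closedBall (0 : lp X 2) 1 | 1 - α < f x} = 2 :=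
  l2_sum_SD2P_general X hsd
end
end
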